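/- Let φ_1, …, φ_N be vectors in a real inner product space, let h_1, …, h_N be one-hot label vectors in ℝ^p (each h_i is a standard basis vector), and let A ∈ ℝ^{N×m} and X ∈ ℝ^{m×N} be matrices with nonnegative entries. Define Ω_{si} = ⟨h_i, h_s⟩·‖φ_i − φ_s‖² + ‖h_i − h_s‖² and J_dis(A, X) = (1/2) Σ_{i=1}^N Σ_{s=1}^N (Σ_{t=1}^m a_{st} x_{ti}) Ω_{si}. Then J_dis(A, X) ≥ 0, and J_dis(A, X) = 0 if and only if for all indices i, t, s with x_{ti} ≠ 0 and a_{st} ≠ 0 one has h_i = h_s and φ_i = φ_s. -/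
import Mathlib


open RealInnerProductSpace

/-- Proposition 1: nonnegativity of `J_dis` and characterization of its zeros. -/
theorem jdis_nonneg_and_zero_iff
    {E : Type*} [NormedAddCommGroup E] [InnerProductSpace ℝ E]
    {N m p : ℕ} (φ : Fin N → E) (h : Fin N → EuclideanSpace ℝ (Fin p))
    (hone : ∀ i, ∃ q : Fin p, h i = EuclideanSpace.single q 1)
    (A : Matrix (Fin N) (Fin m) ℝ) (X : Matrix (Fin m) (Fin N) ℝ)
    (hA : ∀ s t, 0 ≤ A s t) (hX : ∀ t i, 0 ≤ X t i)
    (Ω : Fin N → Fin N → ℝ)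
    (hΩ : ∀ s i, Ω s i = ⟪h i, h s⟫ * ‖φ i - φ s‖ ^ 2 + ‖h i - h s‖ ^ 2)
    (J : ℝ)
    (hJ : J = (1 / 2) * ∑ i, ∑ s, (∑ t, A s t * X t i) * Ω s i) :
    0 ≤ J ∧
      (J = 0 ↔ ∀ i t s, X t i ≠ 0 → A s t ≠ 0 → h i = h s ∧ φ i = φ s) := by
  -- inner products of one-hot vectors are nonnegative
  have hinner : ∀ s i : Fin N, 0 ≤ ⟪h i, h s⟫ := by
    intro s i
    obtain ⟨q, hq⟩ := hone i
    obtain ⟨r, hr⟩ := hone s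
    rw [hq, hr, EuclideanSpace.inner_single_left, EuclideanSpace.single_apply]
    by_cases hqr : q = r <;> simp [hqr]
  have hΩnn : ∀ s i, 0 ≤ Ω s i := by
    intro s i
    rw [hΩ]
    have := hinner s i
    positivity
  have hΩzero : ∀ s i, Ω s i = 0 ↔ h i = h s ∧ φ i = φ s := by
    intro s i
    rw [hΩ]
    constructor
    · intro h0
      have h1 : 0 ≤ ⟪h i, h s⟫ * ‖φ i - φ s‖ ^ 2 := by
        have := hinner s i; positivity
      have h2 : (0:ℝ) ≤ ‖h i - h s‖ ^ 2 := by positivity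
      have h3 : ‖h i - h s‖ ^ 2 = 0 := by linarith
      have hhs : h i = h s := by
        have := pow_eq_zero_iff (n := 2) (by norm_num) |>.mp h3
        rwa [norm_eq_zero, sub_eq_zero] at this
      have h4 : ⟪h i, h s⟫ * ‖φ i - φ s‖ ^ 2 = 0 := by linarith
      have h5 : ⟪h i, h s⟫ = 1 := by
        obtain ⟨r, hr⟩ := hone s
        rw [hhs, hr, real_inner_self_eq_norm_sq, EuclideanSpace.norm_single]
        norm_num
      rw [h5, one_mul] at h4
      have := pow_eq_zero_iff (n := 2) (by norm_num) |>.mp h4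
      rw [norm_eq_zero, sub_eq_zero] at this
      exact ⟨hhs, this⟩
    · rintro ⟨h1, h2⟩
      rw [h1, h2]
      simp
  -- each summand is nonnegative
  have hterm : ∀ i s : Fin N, 0 ≤ (∑ t, A s t * X t i) * Ω s i := by
    intro i s
    apply mul_nonneg
    · exact Finset.sum_nonneg fun t _ => mul_nonneg (hA s t) (hX t i)
    · exact hΩnn s i
  have hJnn : 0 ≤ J := by
    rw [hJ]
    apply mul_nonneg (by norm_num)
    exact Finset.sum_nonneg fun i _ =>
      Finset.sum_nonneg fun s _ => hterm i s
  refine ⟨hJnn, ?_⟩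
  have hJzero : J = 0 ↔ ∀ i s : Fin N, (∑ t, A s t * X t i) * Ω s i = 0 := by
    rw [hJ]
    rw [mul_eq_zero]
    constructor
    · rintro (h0 | h0)
      · norm_num at h0
      · intro i s
        have hi := (Finset.sum_eq_zero_iff_of_nonneg
          (fun i _ => Finset.sum_nonneg fun s _ => hterm i s)).mp h0 i (Finset.mem_univ i)
        exact (Finset.sum_eq_zero_iff_of_nonneg
          (fun s _ => hterm i s)).mp hi s (Finset.mem_univ s)
    · intro h0
      right
      exact Finset.sum_eq_zero fun i _ => Finset.sum_eq_zero fun s _ => h0 i s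
  rw [hJzero]
  constructor
  · intro h0 i t s hx ha
    have := h0 i s
    rcases mul_eq_zero.mp this with hS | hO
    · have := (Finset.sum_eq_zero_iff_of_nonneg
        (fun t _ => mul_nonneg (hA s t) (hX t i))).mp hS t (Finset.mem_univ t)
      rcases mul_eq_zero.mp this with h' | h'
      · exact absurd h' ha
      · exact absurd h' hx
    · exact (hΩzero s i).mp hO
  · intro H i s
    by_cases hS : (∑ t, A s t * X t i) = 0
    · rw [hS, zero_mul]
    · have : ∃ t, A s t * X t i ≠ 0 := by
        by_contra hc
        push_neg at hc
        exact hS (Finset.sum_eq_zero fun t _ => hc t)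
      obtain ⟨t, ht⟩ := this
      have ha : A s t ≠ 0 := fun h' => ht (by rw [h', zero_mul])
      have hx : X t i ≠ 0 := fun h' => ht (by rw [h', mul_zero])
      obtain ⟨h1, h2⟩ := H i t s hx ha
      have : Ω s i = 0 := (hΩzero s i).mpr ⟨h1, h2⟩
      rw [this, mul_zero]
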